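/- arXiv:2006.07829 — 5 statements merged into one kernel-verified Lean document; each statement's English description precedes it below -/
import Mathlib

section
/- In a coherent quantale, for any compact element c and any element a: c ≤ ρ(a) if and only if cᵏ ≤ a for some integer k ≥ 1, where ρ(a) = ⋀{p m-prime : a ≤ p}. -/
open CompleteLattice

/-- A commutative integral quantale: a complete lattice with a commutative monoid
structure whose unit is the top element, with multiplication distributing over
arbitrary joins. -/
class CommQuantale (A : Type*) extends CompleteLattice A, CommMonoid A where
  one_eq_top : (1 : A) = ⊤
  mul_sSup_distrib : ∀ (a : A) (S : Set A), a * sSup S = ⨆ b ∈ S, a * b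

namespace CommQuantale

variable {A : Type*} [CommQuantale A]

/-- m-prime element -/
def MPrime (p : A) : Prop := p < 1 ∧ ∀ a b : A, a * b ≤ p → a ≤ p ∨ b ≤ p

/-- radical -/
def rad (a : A) : A := sInf {p : A | MPrime p ∧ a ≤ p}

/-- annihilator / negation `c^⊥ = ⋁{x | c·x = 0}` -/
def perp (c : A) : A := sSup {x : A | c * x = ⊥}

/-- residuation `c → b = ⋁{x | c·x ≤ b}` -/
def resid (c b : A) : A := sSup {x : A | c * x ≤ b}

/-- pure element -/
def IsPure (a : A) : Prop :=
  ∀ c : A, IsCompactElement c → c ≤ a → a ⊔ perp c = 1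

/-- weakly pure element -/
def IsWPure (a : A) : Prop :=
  ∀ c : A, IsCompactElement c → c ≤ a → a ⊔ resid c (rad ⊥) = 1

/-- complemented element -/
def IsComplemented (e : A) : Prop := ∃ f : A, e ⊔ f = 1 ∧ e ⊓ f = ⊥

/-- regular element: a join of complemented elements -/
def IsRegular (a : A) : Prop :=
  ∃ S : Set A, (∀ e ∈ S, IsComplemented e) ∧ a = sSup S

/-- Ker operator -/
def Ker (a : A) : A :=
  sSup {d : A | IsCompactElement d ∧ d ≤ a ∧ a ⊔ perp d = 1}

/-- O operator: `O(p) = ⋁{c compact | c^⊥ ≰ p}` -/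
def O (p : A) : A := sSup {c : A | IsCompactElement c ∧ ¬ perp c ≤ p}

/-- O operator, as in Section 4: `O(p) = ⋁{d compact | d·e = 0 for some compact e ≰ p}` -/
def O' (p : A) : A :=
  sSup {d : A | IsCompactElement d ∧ ∃ e : A, IsCompactElement e ∧ ¬ e ≤ p ∧ d * e = ⊥}

/-- algebraic quantale: every element is the join of the compact elements below it -/
def Algebraic (A : Type*) [CommQuantale A] : Prop :=
  ∀ a : A, a = sSup {c : A | IsCompactElement c ∧ c ≤ a}

/-- coherent quantale -/
def Coherent (A : Type*) [CommQuantale A] : Prop :=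
  Algebraic A ∧ IsCompactElement (1 : A) ∧
    ∀ c d : A, IsCompactElement c → IsCompactElement d → IsCompactElement (c * d)

end CommQuantale

open CommQuantale

namespace CommQuantale

variable {A : Type*} [CommQuantale A]

lemma mul_sup' (a b b' : A) : a * (b ⊔ b') = a * b ⊔ a * b' := by
  have := mul_sSup_distrib a {b, b'}
  rw [sSup_pair] at this
  rw [this, iSup_insert, iSup_singleton]

lemma mul_mono_right' (a : A) {b b' : A} (h : b ≤ b') : a * b ≤ a * b' := by
  calc a * b ≤ (a * b) ⊔ (a * b') := le_sup_left
    _ = a * (b ⊔ b') := (mul_sup' a b b').symm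
    _ = a * b' := by rw [sup_eq_right.mpr h]

lemma mul_le_left' (a b : A) : a * b ≤ a := by
  have : b ≤ 1 := by rw [one_eq_top]; exact le_top
  calc a * b ≤ a * 1 := mul_mono_right' a this
    _ = a := mul_one a

lemma mul_le_right' (a b : A) : a * b ≤ b := by
  rw [mul_comm]; exact mul_le_left' b a

lemma mul_mono' {a a' b b' : A} (ha : a ≤ a') (hb : b ≤ b') : a * b ≤ a' * b' :=
  le_trans (mul_mono_right' a hb) (by rw [mul_comm, mul_comm a'] ; exact mul_mono_right' b' ha)

lemma le_of_pow_le_mprime {p c : A} (hp : MPrime p) :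
    ∀ k : ℕ, 1 ≤ k → c ^ k ≤ p → c ≤ p := by
  intro k
  induction k with
  | zero => intro h; omega
  | succ n ih =>
    intro _ hle
    rcases Nat.eq_or_lt_of_le (Nat.zero_le n) with h0 | h1
    · simpa [← h0] using hle
    · rw [pow_succ] at hle
      rcases hp.2 _ _ hle with h | h
      · exact ih h1 h
      · exact h

lemma pow_compact (hcoh : Coherent A) {c : A} (hc : IsCompactElement c) (k : ℕ) :
    IsCompactElement (c ^ k) := by
  induction k with
  | zero => simpa using hcoh.2.1
  | succ n ih => rw [pow_succ]; exact hcoh.2.2 _ _ ih hc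

end CommQuantale

theorem stmt8 {A : Type*} [CommQuantale A]
    (hcoh : Coherent A) (c a : A) (hc : IsCompactElement c) :
    c ≤ rad a ↔ ∃ k : ℕ, 1 ≤ k ∧ c ^ k ≤ a := by
  constructor
  · intro hrad
    by_contra hcon
    push_neg at hcon
    set S : Set A := {x | a ≤ x ∧ ∀ k : ℕ, 1 ≤ k → ¬ c ^ k ≤ x} with hS
    have haS : a ∈ S := ⟨le_rfl, fun k hk hle => hcon k hk hle⟩
    obtain ⟨p, hap, hpS, hpmax⟩ := zorn_le_nonempty₀ S (by
      intro ch hchS hch y hy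
      refine ⟨sSup ch, ⟨le_trans (hchS hy).1 (le_sSup hy), ?_⟩, fun z hz => le_sSup hz⟩
      intro k hk hle
      obtain ⟨x, hx, hcx⟩ := (isCompactElement_iff_le_of_directed_sSup_le A (c ^ k)).mp
        (pow_compact hcoh hc k) ch ⟨y, hy⟩ hch.directedOn hle
      exact (hchS hx).2 k hk hcx) a haS
    have hprime : MPrime p := by
      constructor
      · rw [one_eq_top]
        rcases lt_or_eq_of_le (le_top : p ≤ ⊤) with h | h
        · exact h
        · exfalso; exact hpS.2 1 le_rfl (by rw [h]; exact le_top)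
      · intro x y hxy
        by_contra hcon2
        push_neg at hcon2
        have hx : ¬ (p ⊔ x) ∈ S := fun hmem =>
          hcon2.1 (le_sup_right.trans (hpmax hmem le_sup_left))
        have hy : ¬ (p ⊔ y) ∈ S := fun hmem =>
          hcon2.2 (le_sup_right.trans (hpmax hmem le_sup_left))
        simp only [hS, Set.mem_setOf_eq, not_and, not_forall, not_not] at hx hy
        obtain ⟨j, hj1, hjle⟩ := hx (le_trans hpS.1 le_sup_left)
        obtain ⟨k, hk1, hkle⟩ := hy (le_trans hpS.1 le_sup_left)
        have key : c ^ (j + k) ≤ p := by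
          rw [pow_add]
          calc c ^ j * c ^ k ≤ (p ⊔ x) * (p ⊔ y) := mul_mono' hjle hkle
            _ ≤ p := by
              refine (mul_sup' _ _ _).le.trans (sup_le (mul_le_right' _ _) ?_)
              have h2 : (p ⊔ x) * y ≤ p * y ⊔ x * y := by
                rw [mul_comm, mul_sup' y p x, mul_comm y p, mul_comm y x]
              exact h2.trans (sup_le (mul_le_left' _ _) hxy)
        exact hpS.2 (j + k) (by omega) key
    have : rad a ≤ p := _root_.sInf_le ⟨hprime, hpS.1⟩
    exact hpS.2 1 le_rfl (by simpa using hrad.trans this)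
  · rintro ⟨k, hk1, hka⟩
    apply _root_.le_sInf
    rintro p ⟨hp, hap⟩
    exact le_of_pow_le_mprime hp k hk1 (hka.trans hap)
end

section
/- In an algebraic commutative integral quantale with 1 compact, if a is any element and b is a pure element, then a ∧ b = a·b. -/
open CompleteLattice

open CommQuantale

lemma my_mul_sup {A : Type*} [CommQuantale A] (a x y : A) :
    a * (x ⊔ y) = a * x ⊔ a * y := by
  have h := CommQuantale.mul_sSup_distrib a {x, y}
  rw [sSup_pair] at h
  rw [h, iSup_pair]

lemma my_mul_le_mul_left {A : Type*} [CommQuantale A] {x y : A} (a : A) (h : x ≤ y) :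
    a * x ≤ a * y := by
  have : a * (x ⊔ y) = a * x ⊔ a * y := my_mul_sup a x y
  rw [sup_eq_right.mpr h] at this
  rw [this]; exact le_sup_left

lemma my_mul_perp {A : Type*} [CommQuantale A] (c : A) : c * perp c = ⊥ := by
  rw [perp, CommQuantale.mul_sSup_distrib]
  simp only [Set.mem_setOf_eq, iSup_eq_bot]
  intro x hx
  simp [hx]

theorem stmt10 {A : Type*} [CommQuantale A]
    (halg : Algebraic A) (htop : IsCompactElement (1 : A))
    (a b : A) (hb : IsPure b) : a ⊓ b = a * b := by
  apply le_antisymm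
  · conv_lhs => rw [halg (a ⊓ b)]
    apply _root_.sSup_le
    rintro c ⟨hc, hcab⟩
    have hca : c ≤ a := hcab.trans inf_le_left
    have hcb : c ≤ b := hcab.trans inf_le_right
    have h1 : b ⊔ perp c = 1 := hb c hc hcb
    have : c = c * b ⊔ c * perp c := by
      rw [← my_mul_sup, h1, mul_one]
    rw [my_mul_perp, sup_bot_eq] at this
    rw [this, mul_comm c b, mul_comm a b]
    exact my_mul_le_mul_left b hca
  · apply le_inf
    · calc a * b ≤ a * 1 := my_mul_le_mul_left a (by rw [CommQuantale.one_eq_top]; exact le_top)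
        _ = a := mul_one a
    · rw [mul_comm]
      calc b * a ≤ b * 1 := my_mul_le_mul_left b (by rw [CommQuantale.one_eq_top]; exact le_top)
        _ = b := mul_one b
end

section
/- In a semiprime coherent quantale, every pure element is a radical element, i.e. a pure implies ρ(a) = a. -/
open CompleteLattice

open CommQuantale

namespace QAux

open CommQuantale

variable {A : Type*} [CommQuantale A]

lemma qmul_sup (a b c : A) : a * (b ⊔ c) = a * b ⊔ a * c := by
  rw [← sSup_pair, CommQuantale.mul_sSup_distrib, iSup_pair]

lemma qmul_mono {b c : A} (a : A) (h : b ≤ c) : a * b ≤ a * c := by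
  have : a * c = a * b ⊔ a * c := by
    rw [← qmul_sup]; congr 1; exact (sup_eq_right.mpr h).symm
  rw [this]; exact le_sup_left

lemma qmul_le_left (a b : A) : a * b ≤ a := by
  have h : a * b ≤ a * 1 := qmul_mono a (by rw [CommQuantale.one_eq_top]; exact le_top)
  simpa using h

lemma qmul_le_right (a b : A) : a * b ≤ b := by
  rw [mul_comm]; exact qmul_le_left b a

lemma le_rad (a : A) : a ≤ rad a := le_sInf fun p hp => hp.2

lemma prime_pow {p c : A} (hp : MPrime p) : ∀ n : ℕ, c ^ (n + 1) ≤ p → c ≤ p := by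
  intro n
  induction n with
  | zero => intro h; simpa using h
  | succ n ih =>
    intro h
    have h' : c * c ^ (n + 1) ≤ p := by
      rw [← pow_succ']; exact h
    rcases hp.2 _ _ h' with h1 | h1
    · exact h1
    · exact ih h1

lemma pow_compact (hcoh : Coherent A) {c : A} (hc : IsCompactElement c) :
    ∀ n : ℕ, IsCompactElement (c ^ n) := by
  intro n
  induction n with
  | zero => simpa using hcoh.2.1
  | succ n ih => rw [pow_succ]; exact hcoh.2.2 _ _ ih hc

lemma semiprime_pow (hsp : rad (⊥ : A) = ⊥) {c : A} {n : ℕ} (h : c ^ (n + 1) = ⊥) :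
    c = ⊥ := by
  have : c ≤ rad (⊥ : A) := le_sInf fun p hp => prime_pow hp.1 n (h ▸ bot_le)
  rw [hsp] at this
  exact le_bot_iff.mp this

/-- key lemma: compact below radical has a power below -/
lemma pow_le_of_le_rad (hcoh : Coherent A) {a c : A} (hc : IsCompactElement c)
    (h : c ≤ rad a) : ∃ n : ℕ, c ^ (n + 1) ≤ a := by
  by_contra hcon
  push_neg at hcon
  set S : Set A := {x | a ≤ x ∧ ∀ n : ℕ, ¬ c ^ (n + 1) ≤ x} with hS
  have haS : a ∈ S := ⟨le_rfl, hcon⟩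
  obtain ⟨m, hmS, hmax⟩ : ∃ m ∈ S, ∀ z ∈ S, m ≤ z → z = m := by
    obtain ⟨m, hm⟩ := zorn_le₀ S (by
      intro ch hch hchain
      rcases ch.eq_empty_or_nonempty with rfl | hne
      · exact ⟨a, haS, by simp⟩
      refine ⟨sSup ch, ⟨?_, ?_⟩, fun z hz => le_sSup hz⟩
      · obtain ⟨x, hx⟩ := hne
        exact le_trans (hch hx).1 (le_sSup hx)
      · intro n hn
        have hdir : DirectedOn (· ≤ ·) ch := hchain.directedOn
        obtain ⟨x, hx, hlex⟩ :=
          (CompleteLattice.isCompactElement_iff_le_of_directed_sSup_le A _).mp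
            (pow_compact hcoh hc (n + 1)) ch hne hdir hn
        exact (hch hx).2 n hlex)
    exact ⟨m, hm.1, fun z hz hle => le_antisymm (hm.2 hz hle) hle⟩
  have hm1 : MPrime m := by
    constructor
    · rw [CommQuantale.one_eq_top]
      refine lt_of_le_of_ne le_top fun he => hmS.2 0 ?_
      rw [he]; exact le_top
    · intro x y hxy
      by_contra hcon2
      push_neg at hcon2
      have hx : m ⊔ x ∉ S := fun h =>
        hcon2.1 (by have := hmax _ h le_sup_left; rw [← this]; exact le_sup_right)
      have hy : m ⊔ y ∉ S := fun h =>
        hcon2.2 (by have := hmax _ h le_sup_left; rw [← this]; exact le_sup_right)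
      have hax : ∃ n : ℕ, c ^ (n + 1) ≤ m ⊔ x := by
        by_contra h; push_neg at h
        exact hx ⟨le_trans hmS.1 le_sup_left, h⟩
      have hay : ∃ n : ℕ, c ^ (n + 1) ≤ m ⊔ y := by
        by_contra h; push_neg at h
        exact hy ⟨le_trans hmS.1 le_sup_left, h⟩
      obtain ⟨i, hi⟩ := hax
      obtain ⟨j, hj⟩ := hay
      have hprod : (m ⊔ x) * (m ⊔ y) ≤ m := by
        rw [qmul_sup]
        refine sup_le (qmul_le_right _ m) ?_
        rw [mul_comm, qmul_sup]
        exact sup_le (qmul_le_right y m) (le_trans (le_of_eq (mul_comm y x)) hxy)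
      have : c ^ (i + 1 + (j + 1)) ≤ m := by
        rw [pow_add]
        calc c ^ (i + 1) * c ^ (j + 1) ≤ c ^ (i + 1) * (m ⊔ y) := qmul_mono _ hj
          _ = (m ⊔ y) * c ^ (i + 1) := mul_comm _ _
          _ ≤ (m ⊔ y) * (m ⊔ x) := qmul_mono _ hi
          _ = (m ⊔ x) * (m ⊔ y) := mul_comm _ _
          _ ≤ m := hprod
      exact hmS.2 (i + j + 1) (by convert this using 2; omega)
  have : rad a ≤ m := sInf_le ⟨hm1, hmS.1⟩
  exact hmS.2 0 (by simpa using le_trans h this)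

end QAux

open QAux

theorem stmt12 {A : Type*} [CommQuantale A]
    (hcoh : Coherent A) (hsp : rad (⊥ : A) = ⊥)
    (a : A) (ha : IsPure a) : rad a = a := by
  refine le_antisymm ?_ (QAux.le_rad a)
  conv_lhs => rw [hcoh.1 (rad a)]
  refine sSup_le fun c hc => ?_
  obtain ⟨hcc, hcr⟩ := hc
  obtain ⟨n, hn⟩ := QAux.pow_le_of_le_rad hcoh hcc hcr
  have hd : IsCompactElement (c ^ (n + 1)) := QAux.pow_compact hcoh hcc (n + 1)
  have h1 : a ⊔ perp (c ^ (n + 1)) = 1 := ha _ hd hn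
  have hperp : c * perp (c ^ (n + 1)) = ⊥ := by
    rw [perp, CommQuantale.mul_sSup_distrib]
    refine le_bot_iff.mp (iSup_le fun x => iSup_le fun hx => ?_)
    have hpow : (c * x) ^ (n + 1) = ⊥ := by
      refine le_bot_iff.mp ?_
      rw [mul_pow]
      calc c ^ (n + 1) * x ^ (n + 1) ≤ c ^ (n + 1) * x := by
            refine QAux.qmul_mono _ ?_
            calc x ^ (n + 1) = x * x ^ n := by rw [pow_succ']
              _ ≤ x := QAux.qmul_le_left x _
        _ = ⊥ := hx
    exact le_of_eq (QAux.semiprime_pow hsp hpow)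
  calc c = c * 1 := by rw [mul_one]
    _ = c * a ⊔ c * perp (c ^ (n + 1)) := by rw [← QAux.qmul_sup, h1]
    _ ≤ a := by rw [hperp]; simpa using QAux.qmul_le_right c a
end

section
/- In an algebraic commutative integral quantale with 1 compact, the set of weakly pure elements is closed under multiplication, binary meet, and arbitrary joins. -/
open CompleteLattice

open CommQuantale

section Aux

variable {A : Type*} [CommQuantale A]

lemma qmul_sup (a b c : A) : a * (b ⊔ c) = a * b ⊔ a * c := by
  have h := CommQuantale.mul_sSup_distrib a {b, c}
  simpa [iSup_or, iSup_sup_eq, sSup_pair, iSup_iSup_eq_left, iSup_iSup_eq_right] using h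

lemma q_le_one (a : A) : a ≤ 1 := CommQuantale.one_eq_top (A := A) ▸ le_top

lemma q_eq_one_of_one_le {a : A} (h : 1 ≤ a) : a = 1 := le_antisymm (q_le_one a) h

lemma qmul_le_left (a b : A) : a * b ≤ a := by
  have h1 : (b ⊔ (1:A)) = 1 := q_eq_one_of_one_le le_sup_right
  have h := qmul_sup a b 1
  rw [h1, mul_one] at h
  calc a * b ≤ a * b ⊔ a := le_sup_left
    _ = a := h.symm

lemma qmul_le_right (a b : A) : a * b ≤ b := mul_comm a b ▸ qmul_le_left b a

lemma qmul_mono_right (a : A) {b c : A} (h : b ≤ c) : a * b ≤ a * c := by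
  have h2 := qmul_sup a b c
  rw [sup_eq_right.mpr h] at h2
  exact h2 ▸ le_sup_left

lemma q_le_resid {c b x : A} (h : c * x ≤ b) : x ≤ resid c b := le_sSup h

lemma qmul_resid_le (c b : A) : c * resid c b ≤ b := by
  rw [resid, CommQuantale.mul_sSup_distrib]
  exact iSup₂_le fun x hx => hx

lemma sup_one_mul {a b r : A} (ha : a ⊔ r = 1) (hb : b ⊔ r = 1) : a * b ⊔ r = 1 := by
  apply q_eq_one_of_one_le
  have h1 : (1:A) = (a ⊔ r) * (b ⊔ r) := by rw [ha, hb, one_mul]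
  rw [h1, qmul_sup]
  apply sup_le
  · rw [mul_comm, qmul_sup]
    exact sup_le (le_sup_of_le_left (mul_comm b a ▸ le_refl _))
      (le_sup_of_le_right (qmul_le_right b r))
  · exact le_sup_of_le_right (qmul_le_right _ r)

lemma compact_split (halg : Algebraic A) {a b c : A} (hc : IsCompactElement c)
    (h : c ≤ a ⊔ b) :
    ∃ d e : A, IsCompactElement d ∧ IsCompactElement e ∧ d ≤ a ∧ e ≤ b ∧ c ≤ d ⊔ e := by
  classical
  set Ka := {x : A | IsCompactElement x ∧ x ≤ a} with hKa
  set Kb := {x : A | IsCompactElement x ∧ x ≤ b} with hKb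
  have hab : a ⊔ b = sSup (Ka ∪ Kb) := by rw [sSup_union, ← halg a, ← halg b]
  obtain ⟨t, hts, hct⟩ := (isCompactElement_iff_exists_le_sSup_of_le_sSup (k := c)).mp hc (Ka ∪ Kb) (hab ▸ h)
  refine ⟨(t.filter (· ∈ Ka)).sup id, (t.filter (· ∉ Ka)).sup id, ?_, ?_, ?_, ?_, ?_⟩
  · exact isCompactElement_finsetSup _ fun x hx => ((Finset.mem_filter.mp hx).2).1
  · refine isCompactElement_finsetSup _ fun x hx => ?_
    have hxt := Finset.mem_filter.mp hx
    rcases hts hxt.1 with h' | h'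
    · exact absurd h' hxt.2
    · exact h'.1
  · exact Finset.sup_le fun x hx => ((Finset.mem_filter.mp hx).2).2
  · refine Finset.sup_le fun x hx => ?_
    have hxt := Finset.mem_filter.mp hx
    rcases hts hxt.1 with h' | h'
    · exact absurd h' hxt.2
    · exact h'.2
  · refine hct.trans (Finset.sup_le fun x hx => ?_)
    by_cases hxa : x ∈ Ka
    · exact le_sup_of_le_left (Finset.le_sup (Finset.mem_filter.mpr ⟨hx, hxa⟩))
    · exact le_sup_of_le_right (Finset.le_sup (Finset.mem_filter.mpr ⟨hx, hxa⟩))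

lemma IsWPure.qsup (halg : Algebraic A) {a b : A} (ha : IsWPure a) (hb : IsWPure b) :
    IsWPure (a ⊔ b) := by
  intro c hc hcab
  obtain ⟨d, e, hd, he, hda, heb, hcde⟩ := compact_split halg hc hcab
  have h1 := ha d hd hda
  have h2 := hb e he heb
  set x := rad (⊥ : A) with hx
  apply q_eq_one_of_one_le
  have hprod : (1:A) = (a ⊔ resid d x) * (b ⊔ resid e x) := by rw [h1, h2, one_mul]
  rw [hprod, qmul_sup]
  apply sup_le
  · exact le_sup_of_le_left (le_sup_of_le_right (qmul_le_right _ b))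
  · rw [mul_comm, qmul_sup]
    apply sup_le
    · exact le_sup_of_le_left (le_sup_of_le_left (qmul_le_right _ a))
    · refine le_sup_of_le_right ?_
      apply q_le_resid
      calc c * (resid e x * resid d x)
          = (resid e x * resid d x) * c := mul_comm _ _
        _ ≤ (resid e x * resid d x) * (d ⊔ e) := qmul_mono_right _ hcde
        _ = (resid e x * resid d x) * d ⊔ (resid e x * resid d x) * e := qmul_sup _ _ _
        _ ≤ x := ?_
      apply sup_le
      · calc (resid e x * resid d x) * d
            = d * (resid e x * resid d x) := mul_comm _ _
          _ ≤ d * resid d x := qmul_mono_right d (qmul_le_right _ _)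
          _ ≤ x := qmul_resid_le d x
      · calc (resid e x * resid d x) * e
            = e * (resid e x * resid d x) := mul_comm _ _
          _ ≤ e * resid e x := qmul_mono_right e (qmul_le_left _ _)
          _ ≤ x := qmul_resid_le e x

lemma isWPure_bot : IsWPure (⊥ : A) := by
  intro c hc hcb
  apply q_eq_one_of_one_le
  refine le_sup_of_le_right (q_le_resid ?_)
  rw [mul_one]
  exact hcb.trans bot_le

lemma finset_sup_wpure (halg : Algebraic A) (t : Finset A) (h : ∀ x ∈ t, IsWPure x) :
    IsWPure (t.sup id) := by
  classical
  induction t using Finset.induction_on with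
  | empty => simpa using isWPure_bot
  | @insert a s ha ih =>
    rw [Finset.sup_insert]
    exact IsWPure.qsup halg (h a (Finset.mem_insert_self a s))
      (ih fun x hx => h x (Finset.mem_insert_of_mem hx))

end Aux


theorem stmt14 {A : Type*} [CommQuantale A] {ι : Type*}
    (halg : Algebraic A) (htop : IsCompactElement (1 : A)) :
    (∀ a b : A, IsWPure a → IsWPure b → IsWPure (a * b) ∧ IsWPure (a ⊓ b)) ∧
    (∀ f : ι → A, (∀ i, IsWPure (f i)) → IsWPure (⨆ i, f i)) := by
  constructor
  · intro a b ha hb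
    constructor
    · intro c hc hcab
      have hca : c ≤ a := hcab.trans (qmul_le_left a b)
      have hcb : c ≤ b := hcab.trans (qmul_le_right a b)
      exact sup_one_mul (ha c hc hca) (hb c hc hcb)
    · intro c hc hcab
      have hca : c ≤ a := hcab.trans inf_le_left
      have hcb : c ≤ b := hcab.trans inf_le_right
      have h1 := sup_one_mul (ha c hc hca) (hb c hc hcb)
      apply q_eq_one_of_one_le
      calc (1:A) = a * b ⊔ resid c (rad ⊥) := h1.symm
        _ ≤ (a ⊓ b) ⊔ resid c (rad ⊥) :=
            sup_le_sup_right (le_inf (qmul_le_left a b) (qmul_le_right a b)) _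
  · intro f hf c hc hcf
    have hcr : c ≤ sSup (Set.range f) := hcf
    obtain ⟨t, hts, hct⟩ := (isCompactElement_iff_exists_le_sSup_of_le_sSup (k := c)).mp hc (Set.range f) hcr
    have hwt : IsWPure (t.sup id) := finset_sup_wpure halg t fun x hx => by
      obtain ⟨i, rfl⟩ := hts hx
      exact hf i
    have h1 := hwt c hc hct
    apply q_eq_one_of_one_le
    calc (1:A) = t.sup id ⊔ resid c (rad ⊥) := h1.symm
      _ ≤ (⨆ i, f i) ⊔ resid c (rad ⊥) :=
          sup_le_sup_right (Finset.sup_le fun x hx => by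
            obtain ⟨i, rfl⟩ := hts hx
            exact le_iSup f i) _
end

section
/- In a coherent quantale A, for any element a and compact element c: c ≤ Ker(a) if and only if a ∨ c^⊥ = 1, where Ker(a) = ⋁{d compact : d ≤ a and a ∨ d^⊥ = 1}. -/
open CompleteLattice

open CommQuantale

namespace CommQuantaleAux

open CommQuantale

variable {A : Type*} [CommQuantale A]

lemma mul_mono_right {b c : A} (h : b ≤ c) (a : A) : a * b ≤ a * c := by
  have hs : a * c = a * sSup {b, c} := by rw [sSup_pair, sup_eq_right.mpr h]
  rw [hs, CommQuantale.mul_sSup_distrib]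
  exact le_iSup₂_of_le b (by simp) le_rfl

lemma mul_sup_distrib (a b c : A) : a * (b ⊔ c) = a * b ⊔ a * c := by
  rw [← sSup_pair, CommQuantale.mul_sSup_distrib]
  simp [iSup_or, iSup_sup_eq]

lemma bot_mul' (a : A) : a * (⊥ : A) = ⊥ := by
  have : a * sSup (∅ : Set A) = ⨆ b ∈ (∅ : Set A), a * b :=
    CommQuantale.mul_sSup_distrib a ∅
  simpa using this

lemma mul_le_left (a b : A) : a * b ≤ a := by
  calc a * b ≤ a * 1 := mul_mono_right (CommQuantale.one_eq_top (A := A) ▸ le_top) a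
  _ = a := mul_one a

lemma mul_le_right (a b : A) : a * b ≤ b := by
  rw [mul_comm]; exact mul_le_left b a

lemma mul_perp_self (c : A) : c * perp c = ⊥ := by
  rw [perp, CommQuantale.mul_sSup_distrib]
  refine le_antisymm (iSup₂_le fun x hx => hx.le) bot_le

lemma perp_anti {b c : A} (h : b ≤ c) : perp c ≤ perp b := by
  apply sSup_le_sSup
  intro x hx
  have : b * x ≤ c * x := by
    rw [mul_comm b, mul_comm c]; exact mul_mono_right h x
  exact le_antisymm (hx ▸ this) bot_le

lemma sup_perp_sup {a d e : A} (hd : a ⊔ perp d = 1) (he : a ⊔ perp e = 1) :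
    a ⊔ perp (d ⊔ e) = 1 := by
  have hle : perp d * perp e ≤ perp (d ⊔ e) := by
    apply _root_.le_sSup
    show (d ⊔ e) * (perp d * perp e) = ⊥
    rw [mul_comm, mul_sup_distrib]
    have h1 : perp d * perp e * d = ⊥ := by
      rw [mul_comm (perp d) (perp e), mul_assoc, mul_comm (perp d) d,
        mul_perp_self, bot_mul']
    have h2 : perp d * perp e * e = ⊥ := by
      rw [mul_assoc, mul_comm (perp e) e, mul_perp_self, bot_mul']
    rw [h1, h2, sup_idem]
  have key : (1 : A) ≤ a ⊔ perp (d ⊔ e) := by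
    calc (1 : A) = (a ⊔ perp d) * (a ⊔ perp e) := by rw [hd, he, one_mul]
    _ = (a ⊔ perp d) * a ⊔ (a ⊔ perp d) * perp e := mul_sup_distrib _ _ _
    _ ≤ a ⊔ (a ⊔ perp d) * perp e := by
        exact sup_le_sup_right (mul_le_right _ _) _
    _ = a ⊔ (a * perp e ⊔ perp d * perp e) := by
        rw [mul_comm (a ⊔ perp d), mul_sup_distrib, mul_comm (perp e) a,
          mul_comm (perp e) (perp d)]
    _ ≤ a ⊔ (a ⊔ perp (d ⊔ e)) := by
        apply sup_le_sup_left
        exact sup_le ((mul_le_left a _).trans le_sup_left) (hle.trans le_sup_right)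
    _ = a ⊔ perp (d ⊔ e) := by rw [← sup_assoc, sup_idem]
  refine le_antisymm ?_ key
  rw [CommQuantale.one_eq_top]; exact le_top

end CommQuantaleAux

open CommQuantaleAux


theorem stmt15 {A : Type*} [CommQuantale A]
    (hcoh : Coherent A) (a c : A) (hc : IsCompactElement c) :
    c ≤ Ker a ↔ a ⊔ perp c = 1 := by
  constructor
  · intro h
    obtain ⟨t, htD, hct⟩ := (isCompactElement_iff_exists_le_sSup_of_le_sSup A c).mp hc _ h
    have hsup : ∀ u : Finset A,
        (↑u ⊆ {d : A | IsCompactElement d ∧ d ≤ a ∧ a ⊔ perp d = 1}) →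
        a ⊔ perp (u.sup id) = 1 := by
      classical
      intro u
      induction u using Finset.induction_on with
      | empty =>
        intro _
        simp only [Finset.sup_empty]
        have : perp (⊥ : A) = ⊤ := by
          refine le_antisymm le_top (_root_.le_sSup ?_)
          show (⊥ : A) * ⊤ = ⊥
          rw [mul_comm]; exact bot_mul' ⊤
        rw [this, CommQuantale.one_eq_top, sup_top_eq]
      | insert _ _ _ ih =>
        rename_i d u' _
        intro hsub
        rw [Finset.coe_insert, Set.insert_subset_iff] at hsub
        rw [Finset.sup_insert]
        exact sup_perp_sup hsub.1.2.2 (ih hsub.2)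
    have h1 := hsup t htD
    have := perp_anti hct
    refine le_antisymm ?_ (h1 ▸ sup_le_sup_left this a)
    rw [CommQuantale.one_eq_top]; exact le_top
  · intro h
    have hca : c ≤ a := by
      have : c = c * a ⊔ c * perp c := by
        rw [← mul_sup_distrib, h, mul_one]
      rw [this, mul_perp_self, sup_bot_eq]
      exact mul_le_right c a
    exact _root_.le_sSup ⟨hc, hca, h⟩
end
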